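/- In genus 3, for any azygetic triple of odd characteristics m₁, m₂, m₃, there are exactly 6 even characteristics n such that the quadruple (m₁, m₂, m₃, n) is azygetic, and the sum m₁+m₂+m₃ is one of these six. -/

import Mathlib

open Finset

/-- The space of theta characteristics in genus `g`: pairs `(m', m'')` of vectors in `F_2^g`. -/
abbrev V (g : ℕ) := (Fin g → ZMod 2) × (Fin g → ZMod 2)

/-- The `F_2`-inner product of two vectors. -/
def dotp {g : ℕ} (a b : Fin g → ZMod 2) : ZMod 2 := ∑ i, a i * b i

/-- The parity invariant `m'·m'' ∈ F_2`; `m` is even iff `par m = 0`. -/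
def par {g : ℕ} (m : V g) : ZMod 2 := dotp m.1 m.2

/-- The sign `e(m) = (-1)^{m'·m''}`. -/
def e {g : ℕ} (m : V g) : ℤ := (-1) ^ (par m).val

/-- The syzygy invariant `e(m₁,m₂,m₃) = e(m₁)e(m₂)e(m₃)e(m₁+m₂+m₃)`. -/
def e3 {g : ℕ} (m₁ m₂ m₃ : V g) : ℤ := e m₁ * e m₂ * e m₃ * e (m₁ + m₂ + m₃)

/-- The standard symplectic form `⟨m,n⟩ = m'·n'' + m''·n'` on `F_2^{2g}`. -/
def sp {g : ℕ} (m n : V g) : ZMod 2 := dotp m.1 n.2 + dotp m.2 n.1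

/-!
Translating by `M = m₁ + m₂ + m₃`, which is even, the conditions on `n = u + M` become
`par u = sp u mᵢ` for `i = 1, 2, 3`, and `u = 0` gives `n = M`. Counting such `u` means expanding
`∏ᵢ (1 + (-1) ^ (par u + sp u mᵢ))` and summing over `u`. The quadratic Gauss sums
`∑ᵤ (-1) ^ (par u + sp u m) = 2 ^ g e(m)` contribute `-3 · 2 ^ g` (the `mᵢ`) and `2 ^ g` (`M`);
the linear sums `∑ᵤ (-1) ^ sp u (mᵢ + mⱼ)` vanish because an azygetic triple has distinct entries.
Hence `8 · #{n} = 4 ^ g - 2 ^ (g + 1)`, which is `48` in genus `3`.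
-/

abbrev chi : AddChar (ZMod 2) ℤ := AddChar.zmodChar 2 (by norm_num : (-1 : ℤ) ^ 2 = 1)

lemma chi_eq_one_iff {x : ZMod 2} : chi x = 1 ↔ x = 0 := by revert x; decide

lemma chi_one : chi 1 = -1 := rfl

lemma chi_eq_neg_one_iff {x : ZMod 2} : chi x = -1 ↔ x = 1 := by revert x; decide

lemma sum_chi_eq_zero {G : Type*} [AddGroup G] [Fintype G] {f : G →+ ZMod 2} (hf : f ≠ 0) :
    ∑ x, chi (f x) = 0 :=
  AddChar.sum_eq_zero_of_ne_one (ψ := chi.compAddMonoidHom f) <| AddChar.ne_one_iff.2 <| by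
    obtain ⟨x, hx⟩ := DFunLike.ne_iff.1 hf
    exact ⟨x, by simpa [chi_eq_one_iff] using hx⟩

section Characteristics

variable {g : ℕ}

lemma dotp_eq_dotProduct (a b : Fin g → ZMod 2) : dotp a b = a ⬝ᵥ b := rfl

lemma e_eq_chi (m : V g) : e m = chi (par m) := rfl

lemma e_mul_self (m : V g) : e m * e m = 1 := by
  rw [e_eq_chi, ← AddChar.map_add_eq_mul, ZModModule.add_self, AddChar.map_zero_eq_one]

lemma e3_eq_chi (a b c : V g) : e3 a b c = chi (par a + par b + par c + par (a + b + c)) := by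
  simp only [e3, e_eq_chi, AddChar.map_add_eq_mul]

lemma e3_self_left (a c : V g) : e3 a a c = 1 := by
  rw [e3, ZModModule.add_self, zero_add, mul_assoc, e_mul_self, e_mul_self, one_mul]

lemma e3_comm_left (a b c : V g) : e3 a b c = e3 b a c := by
  rw [e3, e3, add_comm a b]; ring

lemma e3_comm_right (a b c : V g) : e3 a b c = e3 a c b := by
  rw [e3, e3, add_right_comm a b c]; ring

lemma ne_of_e3_eq_neg_one {a b c : V g} (h : e3 a b c = -1) : a ≠ b ∧ a ≠ c ∧ b ≠ c := by
  refine ⟨?_, ?_, ?_⟩ <;> rintro rfl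
  · rw [e3_self_left] at h; norm_num at h
  · rw [e3_comm_right, e3_self_left] at h; norm_num at h
  · rw [e3_comm_left, e3_comm_right, e3_self_left] at h; norm_num at h

lemma par_add_add_eq_zero {a b c : V g} (ha : par a = 1) (hb : par b = 1) (hc : par c = 1)
    (h : e3 a b c = -1) : par (a + b + c) = 0 := by
  rw [e3_eq_chi, ha, hb, hc, chi_eq_neg_one_iff] at h
  grind

lemma sp_add_left (u v a : V g) : sp (u + v) a = sp u a + sp v a := by
  simp only [sp, dotp_eq_dotProduct, Prod.fst_add, Prod.snd_add, add_dotProduct]; ring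

lemma sp_add_right (u a b : V g) : sp u (a + b) = sp u a + sp u b := by
  simp only [sp, dotp_eq_dotProduct, Prod.fst_add, Prod.snd_add, dotProduct_add]; ring

lemma par_add (u v : V g) : par (u + v) = par u + par v + sp u v := by
  simp only [par, sp, dotp_eq_dotProduct, Prod.fst_add, Prod.snd_add, add_dotProduct,
    dotProduct_add, dotProduct_comm v.1 u.2]
  ring

lemma eq_zero_of_forall_sp_eq_zero {a : V g} (h : ∀ u, sp u a = 0) : a = 0 := by
  refine Prod.ext (dotProduct_eq_zero_iff.1 fun w => ?_) (dotProduct_eq_zero_iff.1 fun w => ?_)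
  · simpa [sp, dotp_eq_dotProduct, dotProduct_comm] using h (0, w)
  · simpa [sp, dotp_eq_dotProduct, dotProduct_comm] using h (w, 0)

lemma card_V : Fintype.card (V g) = 4 ^ g := by
  simp [Fintype.card_prod, ← mul_pow]

lemma sum_chi_par : ∑ u : V g, chi (par u) = 2 ^ g := by
  have inner (a : Fin g → ZMod 2) : ∑ b, chi (a ⬝ᵥ b) = if a = 0 then 2 ^ g else 0 := by
    split_ifs with ha
    · simp [ha]
    · exact sum_chi_eq_zero (f := AddMonoidHom.mk' (a ⬝ᵥ ·) (dotProduct_add a))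
        fun hf => ha <| dotProduct_eq_zero_iff.1 fun w => DFunLike.congr_fun hf w
  simp only [Fintype.sum_prod_type, par, dotp_eq_dotProduct, inner, sum_ite_eq', mem_univ, if_true]

lemma sum_chi_par_add_sp (m : V g) : ∑ u : V g, chi (par u + sp u m) = 2 ^ g * chi (par m) :=
  calc ∑ u : V g, chi (par u + sp u m) = ∑ u : V g, chi (par (u + m)) * chi (par m) := by
        refine sum_congr rfl fun u _ => ?_
        rw [← AddChar.map_add_eq_mul, par_add]
        congr 1; grind
    _ = 2 ^ g * chi (par m) := by
        rw [← sum_mul, Fintype.sum_equiv (Equiv.addRight m) (fun u => chi (par (u + m)))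
          (fun u => chi (par u)) fun _ => rfl, sum_chi_par]

lemma sum_chi_sp_eq_zero {a : V g} (ha : a ≠ 0) : ∑ u : V g, chi (sp u a) = 0 :=
  sum_chi_eq_zero (f := AddMonoidHom.mk' (sp · a) (sp_add_left · · a))
    fun hf => ha <| eq_zero_of_forall_sp_eq_zero fun u => DFunLike.congr_fun hf u

/-- Given that `(m₁, m₂, m₃)` is azygetic, `(m₁, m₂, m₃, n)` is azygetic iff its three sub-triples
through `n` are. -/
def evenAzygeticCompletions (m₁ m₂ m₃ : V g) : Finset (V g) :=
  univ.filter fun n => par n = 0 ∧ e3 n m₁ m₂ = -1 ∧ e3 n m₁ m₃ = -1 ∧ e3 n m₂ m₃ = -1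

variable {m₁ m₂ m₃ : V g}

lemma add_mem_evenAzygeticCompletions_iff (h₁ : par m₁ = 1) (h₂ : par m₂ = 1)
    (h₃ : par m₃ = 1) (hM : par (m₁ + m₂ + m₃) = 0) (u : V g) :
    u + (m₁ + m₂ + m₃) ∈ evenAzygeticCompletions m₁ m₂ m₃ ↔
      par u + sp u m₁ = 0 ∧ par u + sp u m₂ = 0 ∧ par u + sp u m₃ = 0 := by
  have r₃ : u + (m₁ + m₂ + m₃) + m₁ + m₂ = u + m₃ := by
    rw [← ZModModule.sub_eq_add, ← ZModModule.sub_eq_add]; abel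
  have r₂ : u + (m₁ + m₂ + m₃) + m₁ + m₃ = u + m₂ := by
    rw [← ZModModule.sub_eq_add, ← ZModModule.sub_eq_add]; abel
  have r₁ : u + (m₁ + m₂ + m₃) + m₂ + m₃ = u + m₁ := by
    rw [← ZModModule.sub_eq_add, ← ZModModule.sub_eq_add]; abel
  simp only [evenAzygeticCompletions, mem_filter, mem_univ, true_and, e3_eq_chi,
    chi_eq_neg_one_iff, r₁, r₂, r₃, par_add u, sp_add_right, hM, h₁, h₂, h₃]
  generalize par u = q, sp u m₁ = t₁, sp u m₂ = t₂, sp u m₃ = t₃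
  revert q t₁ t₂ t₃; decide

lemma eight_mul_ite_eq (q t₁ t₂ t₃ : ZMod 2) :
    (if q + t₁ = 0 ∧ q + t₂ = 0 ∧ q + t₃ = 0 then 8 else 0 : ℤ) =
      1 + chi (q + t₁) + chi (q + t₂) + chi (q + t₃) + chi (t₁ + t₂) + chi (t₁ + t₃) +
        chi (t₂ + t₃) + chi (q + (t₁ + t₂ + t₃)) := by
  revert q t₁ t₂ t₃; decide

lemma eight_mul_card_filter_par_add_sp (h₁ : par m₁ = 1) (h₂ : par m₂ = 1) (h₃ : par m₃ = 1)
    (h₁₂ : m₁ ≠ m₂) (h₁₃ : m₁ ≠ m₃) (h₂₃ : m₂ ≠ m₃) (hM : par (m₁ + m₂ + m₃) = 0) :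
    (8 * #(univ.filter fun u : V g =>
        par u + sp u m₁ = 0 ∧ par u + sp u m₂ = 0 ∧ par u + sp u m₃ = 0) : ℤ) =
      4 ^ g - 2 * 2 ^ g := by
  have hne {a b : V g} (h : a ≠ b) : a + b ≠ 0 := by
    rwa [Ne, ← ZModModule.sub_eq_add, sub_eq_zero]
  have expand (u : V g) :
      (if par u + sp u m₁ = 0 ∧ par u + sp u m₂ = 0 ∧ par u + sp u m₃ = 0 then 8 else 0 : ℤ) =
        1 + chi (par u + sp u m₁) + chi (par u + sp u m₂) + chi (par u + sp u m₃) +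
          chi (sp u (m₁ + m₂)) + chi (sp u (m₁ + m₃)) + chi (sp u (m₂ + m₃)) +
          chi (par u + sp u (m₁ + m₂ + m₃)) := by
    simp only [sp_add_right]
    exact eight_mul_ite_eq _ _ _ _
  rw [natCast_card_filter, mul_sum]
  simp only [mul_ite, mul_one, mul_zero, expand, sum_add_distrib, sum_const, card_univ, card_V,
    sum_chi_par_add_sp, sum_chi_sp_eq_zero (hne h₁₂), sum_chi_sp_eq_zero (hne h₁₃),
    sum_chi_sp_eq_zero (hne h₂₃), h₁, h₂, h₃, hM, chi_one, AddChar.map_zero_eq_one]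
  ring

theorem eight_mul_card_evenAzygeticCompletions (h₁ : par m₁ = 1) (h₂ : par m₂ = 1)
    (h₃ : par m₃ = 1) (haz : e3 m₁ m₂ m₃ = -1) :
    (8 * #(evenAzygeticCompletions m₁ m₂ m₃) : ℤ) = 4 ^ g - 2 * 2 ^ g := by
  have hM := par_add_add_eq_zero h₁ h₂ h₃ haz
  obtain ⟨h₁₂, h₁₃, h₂₃⟩ := ne_of_e3_eq_neg_one haz
  have hshift : #(univ.filter fun u : V g =>
      par u + sp u m₁ = 0 ∧ par u + sp u m₂ = 0 ∧ par u + sp u m₃ = 0) =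
        #(evenAzygeticCompletions m₁ m₂ m₃) :=
    card_equiv (Equiv.addRight (m₁ + m₂ + m₃)) fun u => by
      rw [mem_filter_univ, Equiv.coe_addRight, add_mem_evenAzygeticCompletions_iff h₁ h₂ h₃ hM]
  rw [← hshift, eight_mul_card_filter_par_add_sp h₁ h₂ h₃ h₁₂ h₁₃ h₂₃ hM]

theorem add_add_mem_evenAzygeticCompletions (h₁ : par m₁ = 1) (h₂ : par m₂ = 1)
    (h₃ : par m₃ = 1) (haz : e3 m₁ m₂ m₃ = -1) :
    m₁ + m₂ + m₃ ∈ evenAzygeticCompletions m₁ m₂ m₃ := by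
  simpa [par, sp, dotp] using
    (add_mem_evenAzygeticCompletions_iff h₁ h₂ h₃ (par_add_add_eq_zero h₁ h₂ h₃ haz) 0).2

end Characteristics

theorem genus3_six_even_completions (m₁ m₂ m₃ : V 3)
    (h₁ : par m₁ = 1) (h₂ : par m₂ = 1) (h₃ : par m₃ = 1)
    (haz : e3 m₁ m₂ m₃ = -1) :
    (univ.filter (fun n : V 3 => par n = 0 ∧ e3 n m₁ m₂ = -1 ∧ e3 n m₁ m₃ = -1 ∧
        e3 n m₂ m₃ = -1)).card = 6 ∧
    m₁ + m₂ + m₃ ∈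
      univ.filter (fun n : V 3 => par n = 0 ∧ e3 n m₁ m₂ = -1 ∧ e3 n m₁ m₃ = -1 ∧
        e3 n m₂ m₃ = -1) := by
  refine ⟨?_, add_add_mem_evenAzygeticCompletions h₁ h₂ h₃ haz⟩
  have hcard := eight_mul_card_evenAzygeticCompletions h₁ h₂ h₃ haz
  rw [evenAzygeticCompletions] at hcard
  norm_num at hcard
  omega
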